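/- arXiv:2403.15973 — 2 statements merged into one kernel-verified Lean document; each statement's English description precedes it below -/
import Mathlib

section
/- Let A : [0,2r] → ℝ be smooth, positive on (0,2r), strictly increasing on (0,r], and satisfy A(r+s) ≥ A(r−s) for all s ∈ [0,r]. Let 1 ≤ α ≤ 2 and suppose ∫₀^{r̄} A(s) ds ≤ α ∫₀^r A(s) ds with r̄ ∈ [0,2r]. Then r̄ ≤ α r. -/
/-!
If `r̄ > α r`, then `∫₀^{r̄} A > ∫₀^{αr} A`, and this already exceeds `α ∫₀^r A`: writing
`α r = r + c`, the reflection inequality gives `∫_r^{r+c} A ≥ ∫_{r-c}^r A`, and since `A` is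
increasing on `(0, r]`, its mean over the final piece `[r - c, r]` is at least its mean over
`[0, r]`, i.e. `∫_{r-c}^r A ≥ (c / r) ∫₀^r A`.
-/

open Set intervalIntegral MeasureTheory

theorem MonotoneOn.sub_mul_integral_le_sub_mul_integral_of_mem_Icc {f : ℝ → ℝ} {a m b : ℝ}
    (hf : MonotoneOn f (Ioc a b)) (hfi : IntervalIntegrable f volume a b) (hm : m ∈ Icc a b) :
    (b - m) * ∫ x in a..b, f x ≤ (b - a) * ∫ x in m..b, f x := by
  obtain rfl | ham := hm.1.eq_or_lt
  · rfl
  have hm' : m ∈ Ioc a b := ⟨ham, hm.2⟩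
  have hfi_am : IntervalIntegrable f volume a m :=
    hfi.mono_set (uIcc_subset_uIcc_left (Icc_subset_uIcc hm))
  have hfi_mb : IntervalIntegrable f volume m b :=
    hfi.mono_set (uIcc_subset_uIcc_right (Icc_subset_uIcc hm))
  have h_head : ∫ x in a..m, f x ≤ (m - a) * f m := by
    simpa using integral_mono_on_of_le_Ioo hm.1 hfi_am intervalIntegrable_const
      fun x hx ↦ hf ⟨hx.1, hx.2.le.trans hm.2⟩ hm' hx.2.le
  have h_tail : (b - m) * f m ≤ ∫ x in m..b, f x := by
    simpa using integral_mono_on_of_le_Ioo hm.2 intervalIntegrable_const hfi_mb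
      fun x hx ↦ hf hm' ⟨ham.trans hx.1, hx.2.le⟩ hx.1.le
  rw [← integral_add_adjacent_intervals hfi_am hfi_mb]
  nlinarith [sub_nonneg.2 hm.1, sub_nonneg.2 hm.2]

theorem integral_sub_le_integral_add_of_le {f : ℝ → ℝ} {r c : ℝ} (hc : 0 ≤ c)
    (hf : ContinuousOn f (Icc (r - c) (r + c))) (h : ∀ s ∈ Icc 0 c, f (r - s) ≤ f (r + s)) :
    ∫ x in (r - c)..r, f x ≤ ∫ x in r..(r + c), f x := by
  have hsub : ∀ s ∈ uIcc 0 c, r - s ∈ Icc (r - c) (r + c) ∧ r + s ∈ Icc (r - c) (r + c) := by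
    intro s hs
    rw [uIcc_of_le hc] at hs
    exact ⟨⟨by linarith [hs.2], by linarith [hs.1]⟩, ⟨by linarith [hs.1], by linarith [hs.2]⟩⟩
  have hint_sub : IntervalIntegrable (fun s ↦ f (r - s)) volume 0 c :=
    (hf.comp (continuous_sub_left r).continuousOn fun s hs ↦ (hsub s hs).1).intervalIntegrable
  have hint_add : IntervalIntegrable (fun s ↦ f (r + s)) volume 0 c :=
    (hf.comp (continuous_const_add r).continuousOn fun s hs ↦ (hsub s hs).2).intervalIntegrable
  calc ∫ x in (r - c)..r, f x = ∫ s in 0..c, f (r - s) := by simp [integral_comp_sub_left]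
    _ ≤ ∫ s in 0..c, f (r + s) := integral_mono_on hc hint_sub hint_add h
    _ = ∫ x in r..(r + c), f x := by simp [integral_comp_add_left]

theorem mul_integral_le_integral_of_monotoneOn_of_reflect {A : ℝ → ℝ} {r α : ℝ} (hr : 0 < r)
    (hA : ContinuousOn A (Icc 0 (2 * r))) (hmono : MonotoneOn A (Ioc 0 r))
    (hrefl : ∀ s ∈ Icc 0 r, A (r - s) ≤ A (r + s)) (hα1 : 1 ≤ α) (hα2 : α ≤ 2) :
    α * ∫ s in (0:ℝ)..r, A s ≤ ∫ s in (0:ℝ)..(α * r), A s := by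
  obtain ⟨c, hc⟩ : ∃ c, c = (α - 1) * r := ⟨_, rfl⟩
  have hc0 : 0 ≤ c := hc ▸ mul_nonneg (by linarith) hr.le
  have hcr : c ≤ r := by nlinarith
  have hint : ∀ a ∈ Icc 0 (2 * r), ∀ b ∈ Icc 0 (2 * r), IntervalIntegrable A volume a b :=
    fun a ha b hb ↦ (hA.mono (uIcc_subset_Icc ha hb)).intervalIntegrable
  have h0 : (0 : ℝ) ∈ Icc 0 (2 * r) := ⟨le_rfl, by linarith⟩
  have hr' : r ∈ Icc 0 (2 * r) := ⟨hr.le, by linarith⟩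
  have hrc : r + c ∈ Icc 0 (2 * r) := ⟨by linarith, by linarith⟩
  have hmean : c * ∫ s in (0:ℝ)..r, A s ≤ r * ∫ s in (r - c)..r, A s := by
    simpa using hmono.sub_mul_integral_le_sub_mul_integral_of_mem_Icc (hint 0 h0 r hr')
      (m := r - c) ⟨by linarith, by linarith⟩
  have hreflect : ∫ s in (r - c)..r, A s ≤ ∫ s in r..(r + c), A s :=
    integral_sub_le_integral_add_of_le hc0
      (hA.mono (Icc_subset_Icc (by linarith) (by linarith)))
      fun s hs ↦ hrefl s ⟨hs.1, hs.2.trans hcr⟩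
  rw [show α * r = r + c by rw [hc]; ring,
    ← integral_add_adjacent_intervals (hint 0 h0 r hr') (hint r hr' (r + c) hrc)]
  refine le_of_mul_le_mul_left ?_ hr
  linear_combination hmean.trans (mul_le_mul_of_nonneg_left hreflect hr.le) +
    -(∫ s in (0:ℝ)..r, A s) * hc

theorem stmt_0 (r : ℝ) (hr : 0 < r) (A : ℝ → ℝ)
    (hAcont : ContinuousOn A (Icc 0 (2 * r)))
    (hApos : ∀ s ∈ Ioo 0 (2 * r), 0 < A s)
    (hAmono : StrictMonoOn A (Ioc 0 r))
    (hArefl : ∀ s ∈ Icc 0 r, A (r - s) ≤ A (r + s))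
    (α : ℝ) (hα1 : 1 ≤ α) (hα2 : α ≤ 2)
    (rbar : ℝ) (hrbar : rbar ∈ Icc 0 (2 * r))
    (hint : ∫ s in (0:ℝ)..rbar, A s ≤ α * ∫ s in (0:ℝ)..r, A s) :
    rbar ≤ α * r := by
  by_contra! hlt
  have hαr : α * r ∈ Icc 0 (2 * r) := ⟨by nlinarith, by nlinarith⟩
  have htail : 0 < ∫ s in (α * r)..rbar, A s :=
    intervalIntegral_pos_of_pos_on
      (hAcont.mono (uIcc_subset_Icc hαr hrbar)).intervalIntegrable
      (fun x hx ↦ hApos x ⟨hαr.1.trans_lt hx.1, hx.2.trans_le hrbar.2⟩) hlt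
  have hsplit := integral_add_adjacent_intervals (μ := volume)
    (hAcont.mono (uIcc_subset_Icc ⟨le_rfl, by linarith⟩ hαr)).intervalIntegrable
    (hAcont.mono (uIcc_subset_Icc hαr hrbar)).intervalIntegrable
  linarith [mul_integral_le_integral_of_monotoneOn_of_reflect hr hAcont hAmono.monotoneOn
    hArefl hα1 hα2]
end

section
/- For n ≥ 1, let A(s) = sinh^{n−1}(s) for s ∈ [0,∞). If α ≥ 1 and r, r̄ ≥ 0 satisfy ∫₀^{r̄} A(s) ds ≤ α ∫₀^r A(s) ds, then r̄ ≤ α^{1/n} r. -/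
/-! Convexity of `sinh` on `[0, ∞)` together with `sinh 0 = 0` gives `c * sinh t ≤ sinh (c * t)`
for `c ≥ 1`, hence `c ^ n * F r ≤ F (c * r)` for `F x = ∫₀ˣ sinh ^ (n - 1)` after the substitution
`s = c * t`. With `c = α ^ (1 / n)` the hypothesis becomes `F r̄ ≤ F (c * r)`, and `F` is strictly
increasing on `[0, ∞)`. -/

open Set intervalIntegral Real

theorem Real.convexOn_sinh : ConvexOn ℝ (Ici 0) sinh := by
  refine MonotoneOn.convexOn_of_deriv (convex_Ici 0) continuous_sinh.continuousOn
    differentiable_sinh.differentiableOn ?_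
  rw [deriv_sinh, interior_Ici]
  intro x hx y hy hxy
  rw [cosh_le_cosh, abs_of_pos hx, abs_of_pos hy]
  exact hxy

theorem Real.mul_sinh_le_sinh_mul {c t : ℝ} (hc : 1 ≤ c) (ht : 0 ≤ t) :
    c * sinh t ≤ sinh (c * t) := by
  have hc0 : 0 < c := one_pos.trans_le hc
  have h := convexOn_sinh.2 (mem_Ici.2 (by positivity : 0 ≤ c * t)) self_mem_Ici
    (inv_nonneg.2 hc0.le) (sub_nonneg.2 (inv_le_one_of_one_le₀ hc)) (add_sub_cancel _ _)
  simp only [smul_eq_mul, mul_zero, add_zero, sinh_zero, inv_mul_cancel_left₀ hc0.ne'] at h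
  calc c * sinh t ≤ c * (c⁻¹ * sinh (c * t)) := by gcongr
    _ = sinh (c * t) := mul_inv_cancel_left₀ hc0.ne' _

theorem Real.pow_mul_integral_sinh_pow_le (m : ℕ) {c r : ℝ} (hc : 1 ≤ c) (hr : 0 ≤ r) :
    c ^ (m + 1) * ∫ s in (0:ℝ)..r, sinh s ^ m ≤ ∫ s in (0:ℝ)..c * r, sinh s ^ m := by
  have hc0 : 0 < c := one_pos.trans_le hc
  have hsubst : ∫ s in (0:ℝ)..c * r, sinh s ^ m = c * ∫ t in (0:ℝ)..r, sinh (c * t) ^ m := by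
    rw [integral_comp_mul_left (fun s => sinh s ^ m) hc0.ne', smul_eq_mul,
      mul_inv_cancel_left₀ hc0.ne', mul_zero]
  have hmono : ∫ t in (0:ℝ)..r, (c * sinh t) ^ m ≤ ∫ t in (0:ℝ)..r, sinh (c * t) ^ m :=
    integral_mono_on hr (((continuous_const.mul continuous_sinh).pow m).intervalIntegrable _ _)
      (((continuous_sinh.comp (continuous_const.mul continuous_id)).pow m).intervalIntegrable _ _)
      fun t ht => pow_le_pow_left₀ (mul_nonneg hc0.le (sinh_nonneg_iff.2 ht.1))
        (mul_sinh_le_sinh_mul hc ht.1) m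
  calc c ^ (m + 1) * ∫ s in (0:ℝ)..r, sinh s ^ m
      = c * ∫ t in (0:ℝ)..r, (c * sinh t) ^ m := by
        simp only [mul_pow, integral_const_mul]; ring
    _ ≤ c * ∫ t in (0:ℝ)..r, sinh (c * t) ^ m := by gcongr
    _ = ∫ s in (0:ℝ)..c * r, sinh s ^ m := hsubst.symm

theorem Real.strictMonoOn_integral_sinh_pow (m : ℕ) :
    StrictMonoOn (fun x => ∫ s in (0:ℝ)..x, sinh s ^ m) (Ici 0) := by
  intro a ha b _ hab
  have hint : ∀ x y : ℝ, IntervalIntegrable (fun s => sinh s ^ m) MeasureTheory.volume x y :=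
    fun x y => (continuous_sinh.pow m).intervalIntegrable x y
  have hpos : 0 < ∫ s in a..b, sinh s ^ m :=
    intervalIntegral_pos_of_pos_on (hint a b)
      (fun x hx => pow_pos (sinh_pos_iff.2 ((mem_Ici.1 ha).trans_lt hx.1)) m) hab
  have hsplit := integral_interval_sub_left (hint 0 b) (hint 0 a)
  dsimp only
  linarith

theorem stmt_1_general (n : ℕ) (hn : 1 ≤ n) (α : ℝ) (hα : 1 ≤ α)
    (r rbar : ℝ) (hr : 0 ≤ r)
    (hint : ∫ s in (0:ℝ)..rbar, Real.sinh s ^ (n - 1) ≤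
      α * ∫ s in (0:ℝ)..r, Real.sinh s ^ (n - 1)) :
    rbar ≤ α ^ ((1 : ℝ) / n) * r := by
  set c : ℝ := α ^ ((1 : ℝ) / n)
  have hc : 1 ≤ c := one_le_rpow hα (by positivity)
  have hcn : c ^ (n - 1 + 1) = α := by
    rw [Nat.sub_add_cancel hn, ← rpow_natCast, ← rpow_mul (by linarith),
      one_div_mul_cancel (by positivity), rpow_one]
  by_contra! hlt
  have hcr : 0 ≤ c * r := by positivity
  have hgrowth := pow_mul_integral_sinh_pow_le (n - 1) hc hr
  have hstrict := strictMonoOn_integral_sinh_pow (n - 1) hcr (hcr.trans hlt.le) hlt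
  rw [hcn] at hgrowth
  exact absurd (hint.trans hgrowth) (not_le.2 hstrict)

theorem stmt_1 (n : ℕ) (hn : 1 ≤ n) (α : ℝ) (hα : 1 ≤ α)
    (r rbar : ℝ) (hr : 0 ≤ r) (hrbar : 0 ≤ rbar)
    (hint : ∫ s in (0:ℝ)..rbar, Real.sinh s ^ (n - 1) ≤
      α * ∫ s in (0:ℝ)..r, Real.sinh s ^ (n - 1)) :
    rbar ≤ α ^ ((1 : ℝ) / n) * r :=
  stmt_1_general n hn α hα r rbar hr hint
end
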